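/- arXiv:1311.1885 — 2 statements merged into one kernel-verified Lean document; each statement's English description precedes it below -/
import Mathlib

section
/- Let A ∈ ℝ^(n×n), B ∈ ℝ^(n×m), P ∈ ℝ^(n×n) symmetric positive definite, and ξ > 0. Suppose the block matrix [[AᵀPA − P + ξP, AᵀPB],[BᵀPA, BᵀPB − ξI]] is negative semidefinite. Then for any x ∈ ℝⁿ and u ∈ ℝᵐ with xᵀPx ≤ 1 and ‖u‖ ≤ 1, the successor state x₊ = Ax + Bu satisfies x₊ᵀPx₊ ≤ 1, i.e., the ellipsoid {x : xᵀPx ≤ 1} is invariant for the system x₊ = Ax + Bu under inputs bounded in norm by 1. -/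
/-!
Write `V y = yᵀ P y`. Evaluating the block form at `(x, u)` gives the dissipation inequality
`V (A x + B u) ≤ (1 - ξ) V x + ξ ‖u‖²`, so when `ξ ≤ 1` the successor stays in the ellipsoid as a
convex combination of two numbers `≤ 1`. Evaluating it at `(v, 0)` with `v ≠ 0` gives
`0 ≤ V (A v) ≤ (1 - ξ) V v` with `V v > 0`, which forces `ξ ≤ 1` unless the state space is trivial.
-/

open Matrix

section

variable {ι κ : Type*} [Fintype ι] [Fintype κ] [DecidableEq κ]
  (A : Matrix ι ι ℝ) (B : Matrix ι κ ℝ) (P : Matrix ι ι ℝ) (ξ : ℝ)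

def ellipsoidLMI : Matrix (ι ⊕ κ) (ι ⊕ κ) ℝ :=
  fromBlocks (Aᵀ * P * A - P + ξ • P) (Aᵀ * P * B) (Bᵀ * P * A) (Bᵀ * P * B - ξ • 1)

theorem sumElim_dotProduct_ellipsoidLMI_mulVec (x : ι → ℝ) (u : κ → ℝ) :
    Sum.elim x u ⬝ᵥ ellipsoidLMI A B P ξ *ᵥ Sum.elim x u
      = (A *ᵥ x + B *ᵥ u) ⬝ᵥ P *ᵥ (A *ᵥ x + B *ᵥ u)
        - (1 - ξ) * (x ⬝ᵥ P *ᵥ x) - ξ * (u ⬝ᵥ u) := by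
  have transpose_A : ∀ w, x ⬝ᵥ Aᵀ *ᵥ w = A *ᵥ x ⬝ᵥ w := fun w => by
    rw [dotProduct_mulVec, vecMul_transpose]
  have transpose_B : ∀ w, u ⬝ᵥ Bᵀ *ᵥ w = B *ᵥ u ⬝ᵥ w := fun w => by
    rw [dotProduct_mulVec, vecMul_transpose]
  simp only [ellipsoidLMI, fromBlocks_mulVec, sumElim_dotProduct_sumElim, Sum.elim_comp_inl,
    Sum.elim_comp_inr, add_mulVec, sub_mulVec, smul_mulVec, one_mulVec, ← mulVec_mulVec, mulVec_add,
    dotProduct_add, dotProduct_sub, dotProduct_smul, smul_eq_mul, transpose_A, transpose_B,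
    add_dotProduct]
  ring

variable {A B P ξ}

theorem dotProduct_mulVec_le_of_ellipsoidLMI
    (hLMI : ∀ z, z ⬝ᵥ ellipsoidLMI A B P ξ *ᵥ z ≤ 0) (x : ι → ℝ) (u : κ → ℝ) :
    (A *ᵥ x + B *ᵥ u) ⬝ᵥ P *ᵥ (A *ᵥ x + B *ᵥ u) ≤ (1 - ξ) * (x ⬝ᵥ P *ᵥ x) + ξ * (u ⬝ᵥ u) := by
  have h := hLMI (Sum.elim x u)
  rw [sumElim_dotProduct_ellipsoidLMI_mulVec] at h
  linarith

theorem le_one_of_ellipsoidLMI [Nonempty ι] (hP : P.PosDef)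
    (hLMI : ∀ z, z ⬝ᵥ ellipsoidLMI A B P ξ *ᵥ z ≤ 0) : ξ ≤ 1 := by
  obtain ⟨v, hv⟩ := exists_ne (0 : ι → ℝ)
  have h := dotProduct_mulVec_le_of_ellipsoidLMI hLMI v 0
  have hAv : 0 ≤ A *ᵥ v ⬝ᵥ P *ᵥ (A *ᵥ v) := by
    simpa using hP.posSemidef.dotProduct_mulVec_nonneg (A *ᵥ v)
  have hv_pos : 0 < v ⬝ᵥ P *ᵥ v := by simpa using hP.dotProduct_mulVec_pos hv
  simp only [mulVec_zero, add_zero, dotProduct_zero, mul_zero] at h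
  nlinarith

end

theorem stmt_0 {n m : ℕ} (A : Matrix (Fin n) (Fin n) ℝ) (B : Matrix (Fin n) (Fin m) ℝ)
    (P : Matrix (Fin n) (Fin n) ℝ) (hP : P.PosDef) (ξ : ℝ) (hξ : 0 < ξ)
    (hLMI : ∀ z : (Fin n ⊕ Fin m) → ℝ,
      z ⬝ᵥ (Matrix.fromBlocks (Aᵀ * P * A - P + ξ • P) (Aᵀ * P * B)
        (Bᵀ * P * A) (Bᵀ * P * B - ξ • (1 : Matrix (Fin m) (Fin m) ℝ))).mulVec z ≤ 0)
    (x : Fin n → ℝ) (u : Fin m → ℝ)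
    (hx : x ⬝ᵥ P.mulVec x ≤ 1) (hu : u ⬝ᵥ u ≤ 1) :
    (A.mulVec x + B.mulVec u) ⬝ᵥ P.mulVec (A.mulVec x + B.mulVec u) ≤ 1 := by
  rcases isEmpty_or_nonempty (Fin n) with hn | hn
  · simp [dotProduct]
  have hξ_le : ξ ≤ 1 := le_one_of_ellipsoidLMI hP hLMI
  calc (A *ᵥ x + B *ᵥ u) ⬝ᵥ P *ᵥ (A *ᵥ x + B *ᵥ u)
      ≤ (1 - ξ) * (x ⬝ᵥ P *ᵥ x) + ξ * (u ⬝ᵥ u) := dotProduct_mulVec_le_of_ellipsoidLMI hLMI x u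
    _ ≤ (1 - ξ) * 1 + ξ * 1 := by gcongr
    _ = 1 := by ring
end

section
/- Let A ∈ ℝ^(n×n), B ∈ ℝ^(n×m), C ∈ ℝ^(p×n), D ∈ ℝ^(p×m), γ > 0, and suppose there exists a symmetric positive definite matrix P such that the block matrix [[AᵀPA − P + CᵀC, AᵀPB + CᵀD],[BᵀPA + DᵀC, BᵀPB + DᵀD − γ²I]] ⪯ 0. Then for the system x_{k+1} = Ax_k + Bu_k, y_k = Cx_k + Du_k with x₀ = 0, the ℓ₂ gain from u to y is at most γ: for every N, Σ_{k=0}^{N} ‖y_k‖² ≤ γ² Σ_{k=0}^{N} ‖u_k‖². -/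
/-! With the storage function `V x = xᵀ P x`, the LMI evaluated at `(x_k, u_k)` is exactly the
dissipation inequality `V x_{k+1} - V x_k ≤ γ² ‖u_k‖² - ‖y_k‖²`. Summing it over `k ≤ N`
telescopes, and `V x₀ = 0`, `V x_{N+1} ≥ 0` leave the ℓ₂ gain bound. -/

open Matrix

lemma dotProduct_transpose_mulVec_eq_mulVec_dotProduct {ι κ R : Type*} [Fintype ι] [Fintype κ]
    [CommSemiring R] (M : Matrix ι κ R) (v : κ → R) (w : ι → R) :
    v ⬝ᵥ Mᵀ *ᵥ w = (M *ᵥ v) ⬝ᵥ w := by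
  rw [dotProduct_mulVec, vecMul_transpose]

section Dissipation

variable {ι κ ρ : Type*} [Fintype ι] [Fintype κ] [Fintype ρ] [DecidableEq κ]

lemma fromBlocks_dissipation_quadForm (A : Matrix ι ι ℝ) (B : Matrix ι κ ℝ)
    (C : Matrix ρ ι ℝ) (D : Matrix ρ κ ℝ) (P : Matrix ι ι ℝ) (s : ℝ)
    (x : ι → ℝ) (u : κ → ℝ) :
    Sum.elim x u ⬝ᵥ (fromBlocks (Aᵀ * P * A - P + Cᵀ * C) (Aᵀ * P * B + Cᵀ * D)
        (Bᵀ * P * A + Dᵀ * C) (Bᵀ * P * B + Dᵀ * D - s • (1 : Matrix κ κ ℝ))) *ᵥ Sum.elim x u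
      = (A *ᵥ x + B *ᵥ u) ⬝ᵥ P *ᵥ (A *ᵥ x + B *ᵥ u) - x ⬝ᵥ P *ᵥ x
        + (C *ᵥ x + D *ᵥ u) ⬝ᵥ (C *ᵥ x + D *ᵥ u) - s * (u ⬝ᵥ u) := by
  simp only [fromBlocks_mulVec, Sum.elim_comp_inl, Sum.elim_comp_inr,
    sumElim_dotProduct_sumElim, add_mulVec, sub_mulVec, smul_mulVec, one_mulVec,
    ← mulVec_mulVec, dotProduct_add, dotProduct_sub, dotProduct_smul, smul_eq_mul,
    dotProduct_transpose_mulVec_eq_mulVec_dotProduct, mulVec_add, add_dotProduct]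
  ring

lemma dissipation_inequality_of_LMI {A : Matrix ι ι ℝ} {B : Matrix ι κ ℝ}
    {C : Matrix ρ ι ℝ} {D : Matrix ρ κ ℝ} {P : Matrix ι ι ℝ} {s : ℝ}
    (hLMI : ∀ z : ι ⊕ κ → ℝ,
      z ⬝ᵥ (fromBlocks (Aᵀ * P * A - P + Cᵀ * C) (Aᵀ * P * B + Cᵀ * D)
        (Bᵀ * P * A + Dᵀ * C) (Bᵀ * P * B + Dᵀ * D - s • (1 : Matrix κ κ ℝ))) *ᵥ z ≤ 0)
    (x : ι → ℝ) (u : κ → ℝ) :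
    (A *ᵥ x + B *ᵥ u) ⬝ᵥ P *ᵥ (A *ᵥ x + B *ᵥ u) - x ⬝ᵥ P *ᵥ x
      ≤ s * (u ⬝ᵥ u) - (C *ᵥ x + D *ᵥ u) ⬝ᵥ (C *ᵥ x + D *ᵥ u) := by
  have h := hLMI (Sum.elim x u)
  rw [fromBlocks_dissipation_quadForm] at h
  linarith

end Dissipation

lemma sum_range_le_sum_of_dissipation {α : Type*} [AddCommGroup α] [PartialOrder α]
    [IsOrderedAddMonoid α] {V supply output : ℕ → α} (hV0 : V 0 = 0)
    (hV : ∀ k, 0 ≤ V k) (hdiss : ∀ k, V (k + 1) - V k ≤ supply k - output k) (N : ℕ) :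
    ∑ k ∈ Finset.range N, output k ≤ ∑ k ∈ Finset.range N, supply k := by
  have htel : V N ≤ ∑ k ∈ Finset.range N, (supply k - output k) := by
    calc V N = ∑ k ∈ Finset.range N, (V (k + 1) - V k) := by
          rw [Finset.sum_range_sub, hV0, sub_zero]
      _ ≤ _ := Finset.sum_le_sum fun k _ => hdiss k
  rw [Finset.sum_sub_distrib] at htel
  exact sub_nonneg.mp ((hV N).trans htel)

theorem stmt_7_general {n m p : ℕ} (A : Matrix (Fin n) (Fin n) ℝ) (B : Matrix (Fin n) (Fin m) ℝ)
    (C : Matrix (Fin p) (Fin n) ℝ) (D : Matrix (Fin p) (Fin m) ℝ)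
    (γ : ℝ) (P : Matrix (Fin n) (Fin n) ℝ) (hP : P.PosDef)
    (hLMI : ∀ z : (Fin n ⊕ Fin m) → ℝ,
      z ⬝ᵥ (Matrix.fromBlocks (Aᵀ * P * A - P + Cᵀ * C) (Aᵀ * P * B + Cᵀ * D)
        (Bᵀ * P * A + Dᵀ * C)
        (Bᵀ * P * B + Dᵀ * D - (γ ^ 2) • (1 : Matrix (Fin m) (Fin m) ℝ))).mulVec z ≤ 0)
    (u : ℕ → Fin m → ℝ) (x : ℕ → Fin n → ℝ) (y : ℕ → Fin p → ℝ)
    (hx0 : x 0 = 0)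
    (hx : ∀ k, x (k + 1) = A.mulVec (x k) + B.mulVec (u k))
    (hy : ∀ k, y k = C.mulVec (x k) + D.mulVec (u k)) :
    ∀ N : ℕ, ∑ k ∈ Finset.range (N + 1), y k ⬝ᵥ y k ≤
      γ ^ 2 * ∑ k ∈ Finset.range (N + 1), u k ⬝ᵥ u k := by
  intro N
  rw [Finset.mul_sum]
  refine sum_range_le_sum_of_dissipation (V := fun k => x k ⬝ᵥ P *ᵥ x k)
    (supply := fun k => γ ^ 2 * (u k ⬝ᵥ u k)) (output := fun k => y k ⬝ᵥ y k)
    (by simp [hx0]) (fun k => hP.posSemidef.dotProduct_mulVec_nonneg (x k)) (fun k => ?_) _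
  rw [hx k, hy k]
  exact dissipation_inequality_of_LMI hLMI (x k) (u k)

theorem stmt_7 {n m p : ℕ} (A : Matrix (Fin n) (Fin n) ℝ) (B : Matrix (Fin n) (Fin m) ℝ)
    (C : Matrix (Fin p) (Fin n) ℝ) (D : Matrix (Fin p) (Fin m) ℝ)
    (γ : ℝ) (hγ : 0 < γ) (P : Matrix (Fin n) (Fin n) ℝ) (hP : P.PosDef)
    (hLMI : ∀ z : (Fin n ⊕ Fin m) → ℝ,
      z ⬝ᵥ (Matrix.fromBlocks (Aᵀ * P * A - P + Cᵀ * C) (Aᵀ * P * B + Cᵀ * D)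
        (Bᵀ * P * A + Dᵀ * C)
        (Bᵀ * P * B + Dᵀ * D - (γ ^ 2) • (1 : Matrix (Fin m) (Fin m) ℝ))).mulVec z ≤ 0)
    (u : ℕ → Fin m → ℝ) (x : ℕ → Fin n → ℝ) (y : ℕ → Fin p → ℝ)
    (hx0 : x 0 = 0)
    (hx : ∀ k, x (k + 1) = A.mulVec (x k) + B.mulVec (u k))
    (hy : ∀ k, y k = C.mulVec (x k) + D.mulVec (u k)) :
    ∀ N : ℕ, ∑ k ∈ Finset.range (N + 1), y k ⬝ᵥ y k ≤
      γ ^ 2 * ∑ k ∈ Finset.range (N + 1), u k ⬝ᵥ u k :=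
  stmt_7_general A B C D γ P hP hLMI u x y hx0 hx hy
end
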